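/- arXiv:1902.09497 — 5 statements merged into one kernel-verified Lean document; each statement's English description precedes it below -/
import Mathlib

section
/- Let a commutative family of continuous affine self-maps of a nonempty compact convex subset C of a locally convex topological vector space be given. Then the family has a common fixed point in C. (Markov–Kakutani fixed point theorem.) -/
/-!
For a single affine map `f` of `K`, the Cesàro means `xₙ` of an orbit `fᵏ x` satisfy
`f xₙ - xₙ = (fⁿ⁺¹ x - x) / (n + 1)`, which tends to `0` because the compact set `K - K` is von
Neumann bounded; a cluster point of `(xₙ)` is then fixed. In a commuting family each map preserves
the compact convex set of common fixed points of finitely many others, so the fixed-point sets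
have the finite intersection property, and compactness of `C` gives a common fixed point.
-/

open Set Filter Topology

section Affine

variable {E : Type*} [AddCommGroup E] [Module ℝ E]

def IsAffineOn (K : Set E) (f : E → E) : Prop :=
  ∀ x ∈ K, ∀ y ∈ K, ∀ t ∈ Icc (0 : ℝ) 1, f (t • x + (1 - t) • y) = t • f x + (1 - t) • f y

theorem IsAffineOn.mono {K L : Set E} {f : E → E} (hf : IsAffineOn K f) (hLK : L ⊆ K) :
    IsAffineOn L f :=
  fun x hx y hy t ht => hf x (hLK hx) y (hLK hy) t ht

theorem IsAffineOn.convex_setOf_apply_eq_self {K : Set E} {f : E → E} (hf : IsAffineOn K f)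
    (hK : Convex ℝ K) : Convex ℝ {x ∈ K | f x = x} := by
  rintro x ⟨hxK, hfx⟩ y ⟨hyK, hfy⟩ a b ha hb hab
  obtain rfl : b = 1 - a := by linarith
  refine ⟨hK hxK hyK ha hb hab, ?_⟩
  rw [hf x hxK y hyK a ⟨ha, by linarith⟩, hfx, hfy]

/-- `cesaroMean y n` is the average of `y 0, …, y n`, built as a chain of two-point convex
combinations so that only the two-point affinity of a map is needed to push it through. -/
noncomputable def cesaroMean (y : ℕ → E) : ℕ → E
  | 0 => y 0
  | n + 1 => ((n : ℝ) + 2)⁻¹ • y (n + 1) + (1 - ((n : ℝ) + 2)⁻¹) • cesaroMean y n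

theorem inv_natCast_add_two_mem_Icc (n : ℕ) : ((n : ℝ) + 2)⁻¹ ∈ Icc (0 : ℝ) 1 :=
  ⟨by positivity, inv_le_one_of_one_le₀ (by linarith [n.cast_nonneg (α := ℝ)])⟩

theorem Convex.cesaroMean_mem {K : Set E} (hK : Convex ℝ K) {y : ℕ → E} (hy : ∀ n, y n ∈ K)
    (n : ℕ) : cesaroMean y n ∈ K := by
  induction n with
  | zero => exact hy 0
  | succ n ih =>
    have ht := inv_natCast_add_two_mem_Icc n
    exact hK (hy (n + 1)) ih ht.1 (sub_nonneg.2 ht.2) (add_sub_cancel _ _)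

theorem IsAffineOn.apply_cesaroMean_iterate_sub {K : Set E} {f : E → E} (hf : IsAffineOn K f)
    (hK : Convex ℝ K) (hmaps : MapsTo f K K) {x : E} (hx : x ∈ K) (n : ℕ) :
    f (cesaroMean (f^[·] x) n) - cesaroMean (f^[·] x) n = ((n : ℝ) + 1)⁻¹ • (f^[n + 1] x - x) := by
  have horbit : ∀ k, f^[k] x ∈ K := fun k => hmaps.iterate k hx
  induction n with
  | zero => simp [cesaroMean]
  | succ n ih =>
    have hstep := hf _ (horbit (n + 1)) _ (hK.cesaroMean_mem horbit n) _
      (inv_natCast_add_two_mem_Icc n)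
    rw [cesaroMean, hstep, ← Function.iterate_succ_apply' f (n + 1) x,
      eq_add_of_sub_eq' ih]
    have : (n : ℝ) + 1 ≠ 0 := by positivity
    push_cast
    match_scalars <;> field_simp <;> ring

end Affine

theorem IsCompact.exists_apply_eq_self_of_tendsto_sub {X α : Type*} [TopologicalSpace X]
    [AddGroup X] [ContinuousSub X] [T2Space X] {K : Set X} (hK : IsCompact K) {f : X → X}
    (hf : ContinuousOn f K) {l : Filter α} [l.NeBot] {u : α → X} (hu : ∀ a, u a ∈ K)
    (hlim : Tendsto (fun a => f (u a) - u a) l (𝓝 0)) : ∃ c ∈ K, f c = c := by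
  have huK : map u l ≤ 𝓟 K := le_principal_iff.2 (eventually_map.2 (.of_forall hu))
  obtain ⟨c, hcK, hc⟩ := hK.exists_mapClusterPt huK
  have hcont : Tendsto (fun x => f x - x) (𝓝 c ⊓ map u l) (𝓝 (f c - c)) :=
    ((hf c hcK).sub continuousWithinAt_id).tendsto.mono_left (inf_le_inf_left _ huK)
  have hcl : MapClusterPt (f c - c) l (fun a => f (u a) - u a) := hc.tendsto_comp' hcont
  exact ⟨c, hcK, sub_eq_zero.1 (eq_of_nhds_neBot (hcl.clusterPt.mono hlim).neBot)⟩

section CommonFixedPoints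

variable {α ι : Type*} {C : Set α} {T : ι → α → α}

theorem setOf_forall_apply_eq_self_eq_inter_iInter (s : Set ι) :
    {x ∈ C | ∀ i ∈ s, T i x = x} = C ∩ ⋂ i ∈ s, {x ∈ C | T i x = x} := by
  ext x
  simp +contextual

theorem mapsTo_setOf_forall_apply_eq_self {g : α → α} (hmaps : MapsTo g C C)
    (hcomm : ∀ i, ∀ x ∈ C, T i (g x) = g (T i x)) (s : Set ι) :
    MapsTo g {x ∈ C | ∀ i ∈ s, T i x = x} {x ∈ C | ∀ i ∈ s, T i x = x} :=
  fun x ⟨hxC, hx⟩ => ⟨hmaps hxC, fun i hi => by rw [hcomm i x hxC, hx i hi]⟩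

theorem isClosed_setOf_forall_apply_eq_self [TopologicalSpace α] [T2Space α] (hC : IsClosed C)
    (hcont : ∀ i, ContinuousOn (T i) C) (s : Set ι) :
    IsClosed {x ∈ C | ∀ i ∈ s, T i x = x} := by
  rw [setOf_forall_apply_eq_self_eq_inter_iInter]
  exact hC.inter (isClosed_biInter fun i _ => hC.isClosed_eq (hcont i) continuousOn_id)

theorem convex_setOf_forall_apply_eq_self [AddCommGroup α] [Module ℝ α] (hC : Convex ℝ C)
    (haff : ∀ i, IsAffineOn C (T i)) (s : Set ι) :
    Convex ℝ {x ∈ C | ∀ i ∈ s, T i x = x} := by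
  rw [setOf_forall_apply_eq_self_eq_inter_iInter]
  exact hC.inter (convex_iInter₂ fun i _ => (haff i).convex_setOf_apply_eq_self hC)

end CommonFixedPoints

section FixedPoint

variable {E : Type*} [AddCommGroup E] [Module ℝ E] [TopologicalSpace E] [IsTopologicalAddGroup E]
  [ContinuousSMul ℝ E] [T2Space E]

theorem IsAffineOn.exists_apply_eq_self {K : Set E} {f : E → E} (hf : IsAffineOn K f)
    (hne : K.Nonempty) (hcomp : IsCompact K) (hconv : Convex ℝ K) (hmaps : MapsTo f K K)
    (hcont : ContinuousOn f K) : ∃ c ∈ K, f c = c := by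
  obtain ⟨x, hx⟩ := hne
  have horbit : ∀ k, f^[k] x ∈ K := fun k => hmaps.iterate k hx
  refine hcomp.exists_apply_eq_self_of_tendsto_sub hcont (l := atTop)
    (hconv.cesaroMean_mem horbit) ?_
  simp only [hf.apply_cesaroMean_iterate_sub hconv hmaps hx]
  have hbdd := (hcomp.isVonNBounded ℝ).sub (hcomp.isVonNBounded ℝ)
  refine hbdd.smul_tendsto_zero (.of_forall fun n => sub_mem_sub (horbit (n + 1)) hx) ?_
  simpa only [one_div] using tendsto_one_div_add_atTop_nhds_zero_nat (𝕜 := ℝ)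

theorem exists_forall_apply_eq_self_of_finset {ι : Type*} {C : Set E} {T : ι → E → E}
    (hne : C.Nonempty) (hcomp : IsCompact C) (hconv : Convex ℝ C)
    (hmaps : ∀ i, MapsTo (T i) C C) (hcont : ∀ i, ContinuousOn (T i) C)
    (haff : ∀ i, IsAffineOn C (T i)) (hcomm : ∀ i j, ∀ x ∈ C, T i (T j x) = T j (T i x))
    (u : Finset ι) : ∃ c ∈ C, ∀ i ∈ u, T i c = c := by
  classical
  induction u using Finset.induction_on with
  | empty => exact hne.imp fun c hc => ⟨hc, by simp⟩
  | insert j u _ ih =>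
    set K := {x ∈ C | ∀ i ∈ (u : Set ι), T i x = x}
    have hKC : K ⊆ C := sep_subset _ _
    have hKcomp : IsCompact K :=
      hcomp.of_isClosed_subset (isClosed_setOf_forall_apply_eq_self hcomp.isClosed hcont _) hKC
    obtain ⟨c, ⟨hcC, hcu⟩, hcj⟩ := ((haff j).mono hKC).exists_apply_eq_self ih hKcomp
      (convex_setOf_forall_apply_eq_self hconv haff _)
      (mapsTo_setOf_forall_apply_eq_self (hmaps j) (fun i => hcomm i j) _) ((hcont j).mono hKC)
    exact ⟨c, hcC, Finset.forall_mem_insert _ _ _ |>.2 ⟨hcj, hcu⟩⟩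

end FixedPoint

theorem markov_kakutani_general {E : Type*} [AddCommGroup E] [Module ℝ E] [TopologicalSpace E]
    [IsTopologicalAddGroup E] [ContinuousSMul ℝ E] [T2Space E]
    {ι : Type*} (C : Set E) (hne : C.Nonempty) (hcomp : IsCompact C) (hconv : Convex ℝ C)
    (T : ι → E → E)
    (hmaps : ∀ i, MapsTo (T i) C C)
    (hcont : ∀ i, ContinuousOn (T i) C)
    (haff : ∀ i, ∀ x ∈ C, ∀ y ∈ C, ∀ t ∈ Icc (0:ℝ) 1,
      T i (t • x + (1 - t) • y) = t • T i x + (1 - t) • T i y)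
    (hcomm : ∀ i j, ∀ x ∈ C, T i (T j x) = T j (T i x)) :
    ∃ c ∈ C, ∀ i, T i c = c := by
  have hfinite (u : Finset ι) : (C ∩ ⋂ i ∈ u, {x ∈ C | T i x = x}).Nonempty := by
    rw [← Finset.set_biInter_coe, ← setOf_forall_apply_eq_self_eq_inter_iInter]
    exact exists_forall_apply_eq_self_of_finset hne hcomp hconv hmaps hcont haff hcomm u
  obtain ⟨c, hcC, hc⟩ := hcomp.inter_iInter_nonempty (fun i => {x ∈ C | T i x = x})
    (fun i => hcomp.isClosed.isClosed_eq (hcont i) continuousOn_id) hfinite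
  exact ⟨c, hcC, fun i => (mem_iInter.1 hc i).2⟩

/-- **Markov–Kakutani fixed point theorem**: a commuting family of continuous affine
self-maps of a nonempty compact convex subset of a Hausdorff locally convex real
topological vector space has a common fixed point. -/
theorem markov_kakutani {E : Type*} [AddCommGroup E] [Module ℝ E] [TopologicalSpace E]
    [IsTopologicalAddGroup E] [ContinuousSMul ℝ E] [T2Space E] [LocallyConvexSpace ℝ E]
    {ι : Type*} (C : Set E) (hne : C.Nonempty) (hcomp : IsCompact C) (hconv : Convex ℝ C)
    (T : ι → E → E)
    (hmaps : ∀ i, MapsTo (T i) C C)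
    (hcont : ∀ i, ContinuousOn (T i) C)
    (haff : ∀ i, ∀ x ∈ C, ∀ y ∈ C, ∀ t ∈ Icc (0:ℝ) 1,
      T i (t • x + (1 - t) • y) = t • T i x + (1 - t) • T i y)
    (hcomm : ∀ i j, ∀ x ∈ C, T i (T j x) = T j (T i x)) :
    ∃ c ∈ C, ∀ i, T i c = c :=
  markov_kakutani_general C hne hcomp hconv T hmaps hcont haff hcomm
end

section
/- Let G act continuously by affine maps on a nonempty compact convex set C, and let K ≤ G be compact with Haar probability measure κ. Then the barycenter map c ↦ ∫_K k·c dκ(k) is a well-defined continuous affine retraction of C onto the fixed-point set C^K of K, and in particular C^K is a nonempty compact convex set. -/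
/-!
The barycenter `b c = ∫ k • c dκ₀` lies in `C` because `C` is closed and convex. A continuous
affine self-map of `C` commutes with integrals of `C`-valued functions, so for `k₀ ∈ K` left
invariance of Haar measure gives `k₀ • b c = ∫ (k₀ * k) • c dκ₀ = b c`. Bounded convergence makes
`b` continuous, linearity of the integral makes it affine, and `b` fixes `C^K` because the
integrand is then constant. Hence `C^K = b '' C` is nonempty and compact; it is convex as the
common fixed-point set of affine maps.
-/

open MeasureTheory Set

section AffineOn

variable {E F : Type*} [NormedAddCommGroup E] [NormedSpace ℝ E]
  [NormedAddCommGroup F] [NormedSpace ℝ F]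

def AffineOn (C : Set E) (T : E → F) : Prop :=
  ∀ x ∈ C, ∀ y ∈ C, ∀ t ∈ Icc (0:ℝ) 1, T (t • x + (1 - t) • y) = t • T x + (1 - t) • T y

/-- The graph of `T` over `C` is compact and convex, so it contains the barycenter
`(∫ f, ∫ T ∘ f)` of the pushforward of `μ` to the graph. -/
theorem AffineOn.map_integral [CompleteSpace E] [CompleteSpace F] {α : Type*}
    [MeasurableSpace α] {μ : Measure α} [IsProbabilityMeasure μ] {C : Set E}
    (hcomp : IsCompact C) (hconv : Convex ℝ C) {T : E → F} (hTa : AffineOn C T)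
    (hTc : ContinuousOn T C) {f : α → E} (hfC : ∀ x, f x ∈ C) (hf : Integrable f μ)
    (hTf : Integrable (fun x => T (f x)) μ) :
    T (∫ x, f x ∂μ) = ∫ x, T (f x) ∂μ := by
  set graph := (fun x => (x, T x)) '' C
  have hgraph_compact : IsCompact graph :=
    hcomp.image_of_continuousOn (continuousOn_id.prodMk hTc)
  have hgraph_convex : Convex ℝ graph := by
    rintro - ⟨x, hx, rfl⟩ - ⟨y, hy, rfl⟩ s t hs ht hst
    obtain rfl : t = 1 - s := by linarith
    exact ⟨s • x + (1 - s) • y, hconv hx hy hs ht hst,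
      Prod.ext rfl (hTa x hx y hy s ⟨hs, by linarith⟩)⟩
  obtain ⟨z, -, hz⟩ : (∫ x, f x ∂μ, ∫ x, T (f x) ∂μ) ∈ graph := by
    rw [← integral_pair hf hTf]
    exact hgraph_convex.integral_mem hgraph_compact.isClosed
      (.of_forall fun x => ⟨f x, hfC x, rfl⟩) (hf.prodMk hTf)
  simp only [Prod.mk.injEq] at hz
  rw [← hz.1, hz.2]

theorem affineOn_integral {α : Type*} [MeasurableSpace α] {μ : Measure α} {C : Set E}
    {f : α → E → F} (hfa : ∀ y, AffineOn C (f y))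
    (hint : ∀ x ∈ C, Integrable (fun y => f y x) μ) :
    AffineOn C (fun x => ∫ y, f y x ∂μ) := by
  intro x hx z hz t ht
  simp only [hfa _ x hx z hz t ht]
  rw [integral_add, integral_smul, integral_smul]
  exacts [(hint x hx).smul t, (hint z hz).smul (1 - t)]

theorem Convex.setOf_forall_apply_eq_self {ι : Type*} {C : Set E} (hconv : Convex ℝ C)
    {S : Set ι} {T : ι → E → E} (hT : ∀ i ∈ S, AffineOn C (T i)) :
    Convex ℝ {c ∈ C | ∀ i ∈ S, T i c = c} := by
  rintro x ⟨hxC, hx⟩ y ⟨hyC, hy⟩ s t hs ht hst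
  obtain rfl : t = 1 - s := by linarith
  refine ⟨hconv hxC hyC hs ht hst, fun i hi => ?_⟩
  rw [hT i hi x hxC y hyC s ⟨hs, by linarith⟩, hx i hi, hy i hi]

end AffineOn

theorem continuousOn_integral_of_mapsTo_isBounded {X α E : Type*} [TopologicalSpace X] [FirstCountableTopology X]
    [MeasurableSpace α] {μ : Measure α} [IsFiniteMeasure μ]
    [NormedAddCommGroup E] [NormedSpace ℝ E] {f : X → α → E} {s : Set X} {B : Set E}
    (hB : Bornology.IsBounded B) (hfB : ∀ x ∈ s, ∀ y, f x y ∈ B)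
    (hmeas : ∀ x ∈ s, AEStronglyMeasurable (f x) μ) (hcont : ∀ y, ContinuousOn (f · y) s) :
    ContinuousOn (fun x => ∫ y, f x y ∂μ) s := by
  obtain ⟨M, hM⟩ := hB.exists_norm_le
  exact continuousOn_of_dominated hmeas (fun x hx => .of_forall fun y => hM _ (hfB x hx y))
    (integrable_const M) (.of_forall hcont)

theorem apply_integral_orbit_eq_integral_orbit {K E : Type*} [Group K] [MeasurableSpace K]
    [MeasurableMul K] {μ : Measure K} [IsProbabilityMeasure μ] [μ.IsMulLeftInvariant]
    [NormedAddCommGroup E] [NormedSpace ℝ E] [CompleteSpace E]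
    {a : K → E → E} (hmul : ∀ g h c, a (g * h) c = a g (a h c))
    {C : Set E} (hcomp : IsCompact C) (hconv : Convex ℝ C) (hmaps : ∀ k, MapsTo (a k) C C)
    {k₀ : K} (haff : AffineOn C (a k₀)) (hcont : ContinuousOn (a k₀) C)
    {c : E} (hc : c ∈ C) (hint : Integrable (fun k => a k c) μ) :
    a k₀ (∫ k, a k c ∂μ) = ∫ k, a k c ∂μ := by
  have htranslate : (fun k => a k₀ (a k c)) = fun k => a (k₀ * k) c :=
    funext fun k => (hmul k₀ k c).symm
  rw [haff.map_integral hcomp hconv hcont (fun k => hmaps k hc) hint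
      (htranslate ▸ hint.comp_mul_left k₀), htranslate]
  exact integral_mul_left_eq_self (fun k => a k c) k₀

theorem barycenter_retraction_onto_fixed_points_general {G E : Type*} [Group G] [TopologicalSpace G]
    [IsTopologicalGroup G]
    [NormedAddCommGroup E] [NormedSpace ℝ E] [CompleteSpace E]
    [MeasurableSpace G] [BorelSpace G]
    (C : Set E) (hne : C.Nonempty) (hcomp : IsCompact C) (hconv : Convex ℝ C)
    (a : G → E → E)
    (hmul : ∀ g h c, a (g * h) c = a g (a h c))
    (hmaps : ∀ g, MapsTo (a g) C C)
    (hjoint : ContinuousOn (fun p : G × E => a p.1 p.2) (univ ×ˢ C))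
    (haff : ∀ g, ∀ x ∈ C, ∀ y ∈ C, ∀ t ∈ Icc (0:ℝ) 1,
      a g (t • x + (1 - t) • y) = t • a g x + (1 - t) • a g y)
    (K : Subgroup G) [CompactSpace K]
    (κ₀ : Measure K) [κ₀.IsHaarMeasure] [IsProbabilityMeasure κ₀]
    (b : E → E) (hb : ∀ c, b c = ∫ k : K, a (k : G) c ∂κ₀)
    (CK : Set E) (hCK : CK = {c ∈ C | ∀ k ∈ K, a k c = c}) :
    (∀ c ∈ C, b c ∈ CK) ∧
    ContinuousOn b C ∧
    (∀ x ∈ C, ∀ y ∈ C, ∀ t ∈ Icc (0:ℝ) 1,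
      b (t • x + (1 - t) • y) = t • b x + (1 - t) • b y) ∧
    (∀ c ∈ CK, b c = c) ∧
    CK.Nonempty ∧ IsCompact CK ∧ Convex ℝ CK := by
  have hb' : b = fun c => ∫ k : K, a k c ∂κ₀ := funext hb
  subst hb' hCK
  have hcont : ∀ g, ContinuousOn (a g) C := fun g =>
    hjoint.comp (Continuous.prodMk_right g).continuousOn fun _ hx => ⟨trivial, hx⟩
  have horbit : ∀ c ∈ C, Continuous fun k : K => a k c := fun c hc =>
    hjoint.comp_continuous (continuous_subtype_val.prodMk continuous_const) fun _ => ⟨trivial, hc⟩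
  have hint : ∀ c ∈ C, Integrable (fun k : K => a k c) κ₀ := fun c hc =>
    (horbit c hc).integrable_of_hasCompactSupport (.of_compactSpace _)
  have hbCK : ∀ c ∈ C, ∫ k : K, a k c ∂κ₀ ∈ {c ∈ C | ∀ k ∈ K, a k c = c} := fun c hc =>
    ⟨hconv.integral_mem hcomp.isClosed (.of_forall fun k => hmaps k hc) (hint c hc),
      fun k hk => apply_integral_orbit_eq_integral_orbit (a := fun k : K => a k)
        (k₀ := ⟨k, hk⟩) (fun g h => hmul g h)
        hcomp hconv (fun k => hmaps k) (haff k) (hcont k) hc (hint c hc)⟩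
  have hbcont : ContinuousOn (fun c => ∫ k : K, a k c ∂κ₀) C :=
    continuousOn_integral_of_mapsTo_isBounded hcomp.isBounded (fun c hc k => hmaps k hc)
      (fun c hc => (hint c hc).aestronglyMeasurable) (fun k => hcont k)
  have hbfix : ∀ c ∈ {c ∈ C | ∀ k ∈ K, a k c = c}, ∫ k : K, a k c ∂κ₀ = c := fun c hc => by
    simp [integral_congr_ae (.of_forall fun k : K => hc.2 k k.2)]
  have himage : (fun c => ∫ k : K, a k c ∂κ₀) '' C = {c ∈ C | ∀ k ∈ K, a k c = c} :=
    (MapsTo.image_subset hbCK).antisymm fun c hc => ⟨c, hc.1, hbfix c hc⟩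
  refine ⟨hbCK, hbcont, affineOn_integral (fun k => haff k) hint, hbfix, ?_, ?_,
    hconv.setOf_forall_apply_eq_self fun k _ => haff k⟩
  · exact himage ▸ hne.image _
  · exact himage ▸ hcomp.image_of_continuousOn hbcont

/-- If a topological group `G` acts continuously by affine maps on a nonempty compact convex
set `C` and `K ≤ G` is a compact subgroup with Haar probability measure `κ₀`, then the
barycenter map `c ↦ ∫_K k • c dκ₀(k)` is a continuous affine retraction of `C` onto the
fixed-point set `C^K`; in particular `C^K` is a nonempty compact convex set. -/
theorem barycenter_retraction_onto_fixed_points {G E : Type*} [Group G] [TopologicalSpace G]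
    [IsTopologicalGroup G] [T2Space G]
    [NormedAddCommGroup E] [NormedSpace ℝ E] [CompleteSpace E]
    [MeasurableSpace G] [BorelSpace G]
    (C : Set E) (hne : C.Nonempty) (hcomp : IsCompact C) (hconv : Convex ℝ C)
    (a : G → E → E)
    (hone : ∀ c, a 1 c = c)
    (hmul : ∀ g h c, a (g * h) c = a g (a h c))
    (hmaps : ∀ g, MapsTo (a g) C C)
    (hjoint : ContinuousOn (fun p : G × E => a p.1 p.2) (univ ×ˢ C))
    (haff : ∀ g, ∀ x ∈ C, ∀ y ∈ C, ∀ t ∈ Icc (0:ℝ) 1,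
      a g (t • x + (1 - t) • y) = t • a g x + (1 - t) • a g y)
    (K : Subgroup G) [CompactSpace K]
    (κ₀ : Measure K) [κ₀.IsHaarMeasure] [IsProbabilityMeasure κ₀]
    (b : E → E) (hb : ∀ c, b c = ∫ k : K, a (k : G) c ∂κ₀)
    (CK : Set E) (hCK : CK = {c ∈ C | ∀ k ∈ K, a k c = c}) :
    (∀ c ∈ C, b c ∈ CK) ∧
    ContinuousOn b C ∧
    (∀ x ∈ C, ∀ y ∈ C, ∀ t ∈ Icc (0:ℝ) 1,
      b (t • x + (1 - t) • y) = t • b x + (1 - t) • b y) ∧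
    (∀ c ∈ CK, b c = c) ∧
    CK.Nonempty ∧ IsCompact CK ∧ Convex ℝ CK :=
  barycenter_retraction_onto_fixed_points_general C hne hcomp hconv a hmul hmaps hjoint haff K κ₀ b
    hb CK hCK
end

section
/- If a compact group K acts continuously on a compact Hausdorff space X and fixes a unique probability measure on X, then K acts transitively on X. -/
/-!
Pushing the Haar probability measure of `K` forward along an orbit map `g ↦ g • z` gives a
`K`-invariant probability measure carried by the orbit of `z`, which is closed since `K` is
compact. By uniqueness all these measures coincide, so any two orbits have full measure for the
same probability measure; hence they meet, hence they are equal.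
-/

open MeasureTheory Measure MulAction

section Haar

variable {G : Type*} [Group G] [TopologicalSpace G] [IsTopologicalGroup G] [CompactSpace G]
  [MeasurableSpace G] [BorelSpace G]

instance isProbabilityMeasure_haarMeasure_top :
    IsProbabilityMeasure (haarMeasure (⊤ : TopologicalSpace.PositiveCompacts G)) :=
  ⟨haarMeasure_self (K₀ := ⊤)⟩

end Haar

section OrbitMap

variable {G X : Type*} [Monoid G] [MulAction G X] [MeasurableSpace G] [MeasurableSpace X]
  [MeasurableSMul G X]

theorem smulInvariantMeasure_map_smul_const (μ : Measure G) [SMulInvariantMeasure G G μ] (z : X) :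
    SMulInvariantMeasure G X (μ.map (· • z)) :=
  smulInvariantMeasure_map μ _ (fun g h => mul_smul g h z) (measurable_smul_const z)

end OrbitMap

theorem ae_map_smul_const_mem_orbit {G X : Type*} [Group G] [TopologicalSpace G] [CompactSpace G]
    [TopologicalSpace X] [T2Space X] [MeasurableSpace X] [BorelSpace X] [MulAction G X]
    [ContinuousSMul G X] [MeasurableSpace G] (μ : Measure G) (z : X) :
    ∀ᵐ w ∂μ.map (· • z), w ∈ orbit G z :=
  ae_map_mem_range _
    (isCompact_range (continuous_id.smul continuous_const)).isClosed.measurableSet μ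

theorem transitive_of_uniqueInvariantMeasure_general {K X : Type*} [Group K] [TopologicalSpace K]
    [IsTopologicalGroup K] [CompactSpace K]
    [TopologicalSpace X] [T2Space X] [MeasurableSpace X] [BorelSpace X]
    [MulAction K X] [ContinuousSMul K X]
    (huniq : ∃! μ : Measure X, IsProbabilityMeasure μ ∧
      ∀ k : K, Measure.map (fun x => k • x) μ = μ) :
    ∀ x y : X, ∃ k : K, k • x = y := by
  obtain ⟨μ, ⟨hμ_prob, -⟩, hμ_unique⟩ := huniq
  borelize K
  set haar : Measure K := haarMeasure ⊤
  have map_haar_eq (z : X) : haar.map (· • z) = μ := by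
    have := smulInvariantMeasure_map_smul_const haar z
    exact hμ_unique _ ⟨isProbabilityMeasure_map (measurable_smul_const z).aemeasurable,
      fun k => MeasureTheory.map_smul k _⟩
  intro x y
  have hx : ∀ᵐ w ∂μ, w ∈ orbit K x := map_haar_eq x ▸ ae_map_smul_const_mem_orbit haar x
  have hy : ∀ᵐ w ∂μ, w ∈ orbit K y := map_haar_eq y ▸ ae_map_smul_const_mem_orbit haar y
  obtain ⟨w, hwx, hwy⟩ := (hx.and hy).exists
  exact orbit_eq_iff.mp ((orbit_eq_iff.mpr hwy).symm.trans (orbit_eq_iff.mpr hwx))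

/-- If a compact group `K` acts continuously on a compact Hausdorff space `X` and there is
exactly one `K`-invariant probability measure on `X`, then the action is transitive. -/
theorem transitive_of_uniqueInvariantMeasure {K X : Type*} [Group K] [TopologicalSpace K]
    [IsTopologicalGroup K] [CompactSpace K]
    [TopologicalSpace X] [CompactSpace X] [T2Space X] [MeasurableSpace X] [BorelSpace X]
    [MulAction K X] [ContinuousSMul K X]
    (huniq : ∃! μ : Measure X, IsProbabilityMeasure μ ∧
      ∀ k : K, Measure.map (fun x => k • x) μ = μ) :
    ∀ x y : X, ∃ k : K, k • x = y :=
  transitive_of_uniqueInvariantMeasure_general huniq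
end

section
/- Let G = KP with K compact and P closed, and suppose the modular function Δ_P : P → ℝ_{>0} of P satisfies Δ_P = 1 on K ∩ P. Then the function ρ : G → ℝ_{>0} defined by ρ(kp) = Δ_P(p) is well defined and continuous, and satisfies ρ(gp) = ρ(g)Δ_P(p) for all g ∈ G, p ∈ P and ρ(kg) = ρ(g) for all k ∈ K. -/
/-!
Two decompositions `k₁ p₁ = k₂ p₂` differ by `p₁ p₂⁻¹ = k₁⁻¹ k₂ ∈ K ∩ P`, on which `Δ` is
trivial, so `ρ` is well defined; the two invariance properties are then read off a decomposition.
For continuity, the preimage under `ρ` of a closed set `C` is `K · Δ⁻¹(C)`: the product of a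
compact set with a set that is closed in `P`, hence in `G`, so it is closed.
-/

open Set Pointwise

namespace Subgroup

def IsLeftInvariantExtension {G X : Type*} [Group G] (K : Subgroup G) {P : Subgroup G}
    (f : P → X) (ρ : G → X) : Prop :=
  ∀ k ∈ K, ∀ p : P, ρ (k * p) = f p

variable {G : Type*} [Group G] {K P : Subgroup G}

theorem _root_.MonoidHom.map_eq_of_mul_eq_mul {M : Type*} [Monoid M] (f : P →* M)
    (hf : ∀ p : P, (p : G) ∈ K → f p = 1) {k₁ k₂ : G} (hk₁ : k₁ ∈ K) (hk₂ : k₂ ∈ K)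
    {p₁ p₂ : P} (h : k₁ * p₁ = k₂ * p₂) : f p₁ = f p₂ := by
  have hq : ((p₁ * p₂⁻¹ : P) : G) ∈ K := by
    have : ((p₁ * p₂⁻¹ : P) : G) = k₁⁻¹ * k₂ := by
      rw [coe_mul, coe_inv, eq_inv_mul_iff_mul_eq, ← mul_assoc, h, mul_inv_cancel_right]
    exact this ▸ K.mul_mem (K.inv_mem hk₁) hk₂
  calc f p₁ = f (p₁ * p₂⁻¹) * f p₂ := by rw [← map_mul, inv_mul_cancel_right]
    _ = f p₂ := by rw [hf _ hq, one_mul]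

theorem exists_isLeftInvariantExtension {M : Type*} [Monoid M]
    (hKP : ∀ g : G, ∃ k ∈ K, ∃ p ∈ P, g = k * p) (f : P →* M)
    (hf : ∀ p : P, (p : G) ∈ K → f p = 1) : ∃ ρ : G → M, K.IsLeftInvariantExtension f ρ := by
  choose k hk p hp hg using hKP
  exact ⟨fun g ↦ f ⟨p g, hp g⟩, fun k' hk' q ↦ f.map_eq_of_mul_eq_mul hf (hk _) hk' (hg _).symm⟩

namespace IsLeftInvariantExtension

variable {X : Type*} {f : P → X} {ρ : G → X}

theorem exists_apply_eq (hKP : ∀ g : G, ∃ k ∈ K, ∃ p ∈ P, g = k * p)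
    (hρ : K.IsLeftInvariantExtension f ρ) (g : G) : ∃ p : P, ρ g = f p := by
  obtain ⟨k, hk, p, hp, rfl⟩ := hKP g
  exact ⟨⟨p, hp⟩, hρ k hk ⟨p, hp⟩⟩

theorem apply_mul_left (hKP : ∀ g : G, ∃ k ∈ K, ∃ p ∈ P, g = k * p)
    (hρ : K.IsLeftInvariantExtension f ρ) {k : G} (hk : k ∈ K) (g : G) : ρ (k * g) = ρ g := by
  obtain ⟨k', hk', p, hp, rfl⟩ := hKP g
  rw [← mul_assoc, hρ _ (K.mul_mem hk hk') ⟨p, hp⟩, hρ k' hk' ⟨p, hp⟩]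

theorem apply_mul_right {M : Type*} [Monoid M] {f : P →* M} {ρ : G → M}
    (hKP : ∀ g : G, ∃ k ∈ K, ∃ p ∈ P, g = k * p) (hρ : K.IsLeftInvariantExtension f ρ)
    (g : G) (p : P) : ρ (g * p) = ρ g * f p := by
  obtain ⟨k, hk, q, hq, rfl⟩ := hKP g
  rw [mul_assoc, ← coe_mk P q hq, ← coe_mul, hρ k hk, hρ k hk, map_mul]

theorem preimage_eq (hKP : ∀ g : G, ∃ k ∈ K, ∃ p ∈ P, g = k * p)
    (hρ : K.IsLeftInvariantExtension f ρ) (s : Set X) :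
    ρ ⁻¹' s = (K : Set G) * ((↑) '' (f ⁻¹' s)) := by
  ext g
  constructor
  · intro hg
    obtain ⟨k, hk, p, hp, rfl⟩ := hKP g
    rw [mem_preimage, hρ k hk ⟨p, hp⟩] at hg
    exact mul_mem_mul hk ⟨⟨p, hp⟩, hg, rfl⟩
  · rintro ⟨k, hk, _, ⟨p, hp, rfl⟩, rfl⟩
    rwa [mem_preimage, hρ k hk p]

theorem continuous [TopologicalSpace G] [IsTopologicalGroup G] [TopologicalSpace X]
    (hKP : ∀ g : G, ∃ k ∈ K, ∃ p ∈ P, g = k * p) (hρ : K.IsLeftInvariantExtension f ρ)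
    (hK : IsCompact (K : Set G)) (hP : IsClosed (P : Set G)) (hf : Continuous f) :
    Continuous ρ := by
  refine continuous_iff_isClosed.mpr fun s hs ↦ ?_
  rw [hρ.preimage_eq hKP]
  exact (hP.isClosedMap_subtype_val _ (hs.preimage hf)).mul_left_of_isCompact hK

end IsLeftInvariantExtension

end Subgroup

theorem exists_rho_of_modular_function_general {G : Type*} [Group G] [TopologicalSpace G]
    [IsTopologicalGroup G]
    (K P : Subgroup G) (hK : IsCompact (K : Set G)) (hP : IsClosed (P : Set G))
    (hKP : ∀ g : G, ∃ k ∈ K, ∃ p ∈ P, g = k * p)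
    (Δ : P →* ℝ) (hΔcont : Continuous Δ) (hΔpos : ∀ p : P, 0 < Δ p)
    (hΔK : ∀ p : P, (p : G) ∈ K → Δ p = 1) :
    ∃ ρ : G → ℝ, Continuous ρ ∧ (∀ g, 0 < ρ g) ∧
      (∀ k ∈ K, ∀ p : P, ρ (k * (p : G)) = Δ p) ∧
      (∀ g : G, ∀ p : P, ρ (g * (p : G)) = ρ g * Δ p) ∧
      (∀ k ∈ K, ∀ g : G, ρ (k * g) = ρ g) := by
  obtain ⟨ρ, hρ⟩ := K.exists_isLeftInvariantExtension hKP Δ hΔK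
  have hρpos (g : G) : 0 < ρ g := by
    obtain ⟨p, hp⟩ := hρ.exists_apply_eq hKP g
    exact hp ▸ hΔpos p
  exact ⟨ρ, hρ.continuous hKP hK hP hΔcont, hρpos, hρ, hρ.apply_mul_right hKP,
    fun _ hk ↦ hρ.apply_mul_left hKP hk⟩

/-- Let `G = KP` with `K` compact and `P` closed, and let `Δ` be the modular function of `P`
(a continuous homomorphism `P → ℝ_{>0}`) which is trivial on `K ∩ P`. Then
`ρ(kp) = Δ(p)` is a well-defined continuous positive function on `G` satisfying
`ρ(gp) = ρ(g)Δ(p)` and `ρ(kg) = ρ(g)` for `k ∈ K`, `p ∈ P`. -/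
theorem exists_rho_of_modular_function {G : Type*} [Group G] [TopologicalSpace G]
    [IsTopologicalGroup G] [T2Space G] [LocallyCompactSpace G]
    (K P : Subgroup G) (hK : IsCompact (K : Set G)) (hP : IsClosed (P : Set G))
    (hKP : ∀ g : G, ∃ k ∈ K, ∃ p ∈ P, g = k * p)
    (Δ : P →* ℝ) (hΔcont : Continuous Δ) (hΔpos : ∀ p : P, 0 < Δ p)
    (hΔK : ∀ p : P, (p : G) ∈ K → Δ p = 1) :
    ∃ ρ : G → ℝ, Continuous ρ ∧ (∀ g, 0 < ρ g) ∧
      (∀ k ∈ K, ∀ p : P, ρ (k * (p : G)) = Δ p) ∧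
      (∀ g : G, ∀ p : P, ρ (g * (p : G)) = ρ g * Δ p) ∧
      (∀ k ∈ K, ∀ g : G, ρ (k * g) = ρ g) :=
  exists_rho_of_modular_function_general K P hK hP hKP Δ hΔcont hΔpos hΔK
end

section
/- Let G = KP with K compact, P closed, and let ρ : G → ℝ_{>0} satisfy ρ(kgp) = ρ(g)Δ_P(p) for k ∈ K, p ∈ P, where Δ_P is the modular function of P. Then for every s ∈ ℂ the function φ_s(g) = ∫_K ρ(g⁻¹k)^{1/2 + is} dκ(k) satisfies the spherical functional equation φ_s(x)φ_s(y) = ∫_K φ_s(xky) dκ(k) for all x, y ∈ G, provided the matrix-coefficient identity holds, i.e., φ_s is bi-K-invariant and φ_s(e) = 1. -/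
open MeasureTheory Complex

/-!
Decompose `x⁻¹ k' = k₀ p` with `k₀ ∈ K`, `p ∈ P`. The transformation law of `ρ` gives
`ρ(h x⁻¹ k') ρ(e) = ρ(h k₀) ρ(x⁻¹ k')` for every `h`, and `φ_s(e) = 1` says `ρ(e)^{1/2+is} = 1`,
so `f = ρ^{1/2+is}` satisfies `f(h g) = f(h k₀) f(g)`. Writing `∫_K φ_s(x k y) dk` as a double
integral over `K × K`, swapping the integrals and using this factorisation in the inner one
splits it as `φ_s(x) φ_s(y)`: the factor `k₀` is absorbed because the Haar probability measure
of the compact group `K` is invariant under `k ↦ k⁻¹ k₀` (compact groups are unimodular).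
-/

namespace MeasureTheory.Measure

variable {H : Type*} [Group H] [TopologicalSpace H] [IsTopologicalGroup H] [CompactSpace H]
  [MeasurableSpace H] [BorelSpace H] (μ : Measure H) [μ.IsHaarMeasure] [IsProbabilityMeasure μ]

theorem isMulRightInvariant_of_isProbabilityMeasure : μ.IsMulRightInvariant where
  map_mul_right_eq_self g := by
    have : IsProbabilityMeasure (μ.map (· * g)) :=
      isProbabilityMeasure_map (measurable_mul_const g).aemeasurable
    exact isHaarMeasure_eq_of_isProbabilityMeasure _ _

theorem isInvInvariant_of_isProbabilityMeasure : μ.IsInvInvariant where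
  inv_eq_self := by
    have := μ.isMulRightInvariant_of_isProbabilityMeasure
    have : μ.inv.IsHaarMeasure := { }
    have : IsProbabilityMeasure μ.inv := ⟨by simp [inv_apply]⟩
    exact isHaarMeasure_eq_of_isProbabilityMeasure _ _

theorem integral_inv_mul_eq_integral {E : Type*} [NormedAddCommGroup E] [NormedSpace ℝ E]
    (f : H → E) (a : H) : ∫ k, f (k⁻¹ * a) ∂μ = ∫ k, f k ∂μ := by
  have := μ.isInvInvariant_of_isProbabilityMeasure
  calc ∫ k, f (k⁻¹ * a) ∂μ = ∫ k, f (a⁻¹ * k)⁻¹ ∂μ := by simp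
    _ = ∫ k, f k⁻¹ ∂μ := integral_mul_left_eq_self (fun k ↦ f k⁻¹) a⁻¹
    _ = ∫ k, f k ∂μ := integral_inv_eq_self f μ

end MeasureTheory.Measure

section Spherical

variable {G : Type*} [Group G] [TopologicalSpace G] [IsTopologicalGroup G]
  [MeasurableSpace G] [BorelSpace G] {K : Subgroup G} [CompactSpace K]
  (κ : Measure K) [κ.IsHaarMeasure] [IsProbabilityMeasure κ]
  {f : G → ℂ} {φ : G → ℂ} (hφ : ∀ g, φ g = ∫ k : K, f (g⁻¹ * k) ∂κ)
include hφ

theorem integral_inv_mul_mul_of_factorization {g k₀ : G} (hk₀ : k₀ ∈ K)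
    (hfac : ∀ h, f (h * g) = f (h * k₀) * f g) (y : G) :
    ∫ k : K, f (y⁻¹ * (k : G)⁻¹ * g) ∂κ = φ y * f g := by
  have : BorelSpace K := Subtype.borelSpace _
  calc ∫ k : K, f (y⁻¹ * (k : G)⁻¹ * g) ∂κ
      = ∫ k : K, f (y⁻¹ * ((k⁻¹ * ⟨k₀, hk₀⟩ : K) : G)) * f g ∂κ := by
        refine integral_congr_ae (.of_forall fun k ↦ ?_)
        dsimp only
        rw [hfac]
        simp only [Subgroup.coe_mul, Subgroup.coe_inv, mul_assoc]
    _ = φ y * f g := by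
        rw [integral_mul_const, κ.integral_inv_mul_eq_integral (fun k : K ↦ f (y⁻¹ * k)), hφ]

theorem mul_eq_integral_of_factorization (hf : Continuous f)
    (hfac : ∀ g, ∃ k₀ ∈ K, ∀ h, f (h * g) = f (h * k₀) * f g) (x y : G) :
    φ x * φ y = ∫ k : K, φ (x * k * y) ∂κ := by
  have : BorelSpace K := Subtype.borelSpace _
  have hswap : ∫ k : K, ∫ k' : K, f (y⁻¹ * (k : G)⁻¹ * (x⁻¹ * k')) ∂κ ∂κ
      = ∫ k' : K, ∫ k : K, f (y⁻¹ * (k : G)⁻¹ * (x⁻¹ * k')) ∂κ ∂κ :=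
    integral_integral_swap_of_hasCompactSupport (by fun_prop) (HasCompactSupport.of_compactSpace _)
  calc φ x * φ y = ∫ k' : K, ∫ k : K, f (y⁻¹ * (k : G)⁻¹ * (x⁻¹ * k')) ∂κ ∂κ := by
        rw [hφ x, ← integral_mul_const]
        refine integral_congr_ae (.of_forall fun k' ↦ ?_)
        obtain ⟨k₀, hk₀, hfac'⟩ := hfac (x⁻¹ * k')
        dsimp only
        rw [integral_inv_mul_mul_of_factorization κ hφ hk₀ hfac', mul_comm]
    _ = ∫ k : K, φ (x * k * y) ∂κ := by
        rw [← hswap]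
        simp only [hφ, mul_inv_rev, mul_assoc]

end Spherical

section TransformationLaw

variable {G : Type*} [Group G] {K P : Subgroup G} {Δ : P →* ℝ} {ρ : G → ℝ}
  (hρ : ∀ k ∈ K, ∀ g : G, ∀ p : P, ρ (k * g * (p : G)) = ρ g * Δ p)
include hρ

theorem rho_coe_eq_rho_one (k : K) : ρ k = ρ 1 := by
  simpa using hρ k k.2 1 1

theorem rho_mul_mul_rho_one (h : G) {k : G} (hk : k ∈ K) (p : P) :
    ρ (h * (k * p)) * ρ 1 = ρ (h * k) * ρ (k * p) := by
  have hhkp : ρ (h * (k * p)) = ρ (h * k) * Δ p := by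
    simpa [mul_assoc] using hρ 1 K.one_mem (h * k) p
  have hkp : ρ (k * p) = ρ 1 * Δ p := by simpa using hρ k hk 1 p
  rw [hhkp, hkp]
  ring

theorem exists_cpow_rho_mul_eq_mul (hρpos : ∀ g, 0 < ρ g)
    (hKP : ∀ g : G, ∃ k ∈ K, ∃ p ∈ P, g = k * p) {l : ℂ} (hl : (ρ 1 : ℂ) ^ l = 1) (g : G) :
    ∃ k₀ ∈ K, ∀ h, (ρ (h * g) : ℂ) ^ l = (ρ (h * k₀) : ℂ) ^ l * (ρ g : ℂ) ^ l := by
  obtain ⟨k₀, hk₀, p, hp, rfl⟩ := hKP g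
  refine ⟨k₀, hk₀, fun h ↦ ?_⟩
  have := congrArg (fun r : ℝ ↦ (r : ℂ) ^ l) (rho_mul_mul_rho_one hρ h hk₀ ⟨p, hp⟩)
  simp only [ofReal_mul] at this
  rwa [mul_cpow_ofReal_nonneg (hρpos _).le (hρpos _).le, hl, mul_one,
    mul_cpow_ofReal_nonneg (hρpos _).le (hρpos _).le] at this

end TransformationLaw

theorem harish_chandra_function_is_spherical_general {G : Type*} [Group G] [TopologicalSpace G]
    [IsTopologicalGroup G] [MeasurableSpace G] [BorelSpace G]
    (K P : Subgroup G) [CompactSpace K]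
    (hKP : ∀ g : G, ∃ k ∈ K, ∃ p ∈ P, g = k * p)
    (Δ : P →* ℝ)
    (ρ : G → ℝ) (hρcont : Continuous ρ) (hρpos : ∀ g, 0 < ρ g)
    (hρ : ∀ k ∈ K, ∀ g : G, ∀ p : P, ρ (k * g * (p : G)) = ρ g * Δ p)
    (κ₀ : Measure K) [κ₀.IsHaarMeasure] [IsProbabilityMeasure κ₀]
    (s : ℂ) (φs : G → ℂ)
    (hφs : ∀ g : G, φs g = ∫ k : K, ((ρ (g⁻¹ * (k : G)) : ℂ)) ^ ((1:ℂ)/2 + I * s) ∂κ₀)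
    -- the matrix-coefficient identity: `φ_s` is bi-`K`-invariant and `φ_s(e) = 1`
    (hone : φs 1 = 1) :
    ∀ x y : G, φs x * φs y = ∫ k : K, φs (x * (k : G) * y) ∂κ₀ := by
  have hρ_one : (ρ 1 : ℂ) ^ ((1:ℂ)/2 + I * s) = 1 := by
    simpa [hone, rho_coe_eq_rho_one hρ] using (hφs 1).symm
  have hcont : Continuous fun g ↦ (ρ g : ℂ) ^ ((1:ℂ)/2 + I * s) :=
    (continuous_ofReal.comp hρcont).cpow continuous_const
      fun g ↦ ofReal_mem_slitPlane.2 (hρpos g)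
  exact mul_eq_integral_of_factorization κ₀ hφs hcont
    (exists_cpow_rho_mul_eq_mul hρ hρpos hKP hρ_one)

/-- Let `G = KP` with `K` compact and `P` closed, let `Δ` be the modular function of `P`,
and let `ρ : G → ℝ_{>0}` satisfy `ρ(k g p) = ρ(g) Δ(p)`.  For `s ∈ ℂ` set
`φ_s(g) = ∫_K ρ(g⁻¹ k)^{1/2 + is} dκ(k)` where `κ` is the Haar probability measure of `K`.
If `φ_s` is bi-`K`-invariant and `φ_s(e) = 1` (the matrix-coefficient identity), then `φ_s`
satisfies the spherical functional equation
`φ_s(x) φ_s(y) = ∫_K φ_s(x k y) dκ(k)`. -/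
theorem harish_chandra_function_is_spherical {G : Type*} [Group G] [TopologicalSpace G]
    [IsTopologicalGroup G] [LocallyCompactSpace G] [T2Space G]
    [MeasurableSpace G] [BorelSpace G]
    (K P : Subgroup G) [CompactSpace K] (hP : IsClosed (P : Set G))
    (hKP : ∀ g : G, ∃ k ∈ K, ∃ p ∈ P, g = k * p)
    (Δ : P →* ℝ) (hΔcont : Continuous Δ) (hΔpos : ∀ p : P, 0 < Δ p)
    (hΔK : ∀ p : P, (p : G) ∈ K → Δ p = 1)
    (ρ : G → ℝ) (hρcont : Continuous ρ) (hρpos : ∀ g, 0 < ρ g)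
    (hρ : ∀ k ∈ K, ∀ g : G, ∀ p : P, ρ (k * g * (p : G)) = ρ g * Δ p)
    (κ₀ : Measure K) [κ₀.IsHaarMeasure] [IsProbabilityMeasure κ₀]
    (s : ℂ) (φs : G → ℂ)
    (hφs : ∀ g : G, φs g = ∫ k : K, ((ρ (g⁻¹ * (k : G)) : ℂ)) ^ ((1:ℂ)/2 + I * s) ∂κ₀)
    -- the matrix-coefficient identity: `φ_s` is bi-`K`-invariant and `φ_s(e) = 1`
    (hbi : ∀ k ∈ K, ∀ k' ∈ K, ∀ g : G, φs (k * g * k') = φs g)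
    (hone : φs 1 = 1) :
    ∀ x y : G, φs x * φs y = ∫ k : K, φs (x * (k : G) * y) ∂κ₀ :=
  harish_chandra_function_is_spherical_general K P hKP Δ ρ hρcont hρpos hρ κ₀ s φs hφs hone
end
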